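/- Let n be an integer with 3 ≤ n ≤ 8. In Z^{10-n} with generators H, E_1, ..., E_{9-n} and intersection form H² = 1, H·E_i = 0, E_i·E_j = -δ_{ij}, a class C = aH - Σ_{i=1}^{9-n} b_i E_i with a ≥ 0 and b_i ≥ 0 satisfies 3a - Σ b_i = 2 and a² - Σ b_i² = 0 if and only if C is one of: (i) H - E_i for some i; (ii) 2H - E_a - E_b - E_c - E_d for four distinct indices; or (iii) 3H - 2E_a - E_b - E_c - E_d - E_e - E_f for six distinct indices (whenever such indices exist among 1, ..., 9-n). -/

import Mathlib

/-!
Write `c₁`, `c₂` for the numbers of points of multiplicity one and two. Cauchy–Schwarz with at most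
six points gives `(3a - 2)² ≤ 6a²`, so `a ≤ 3`, and `∑ bᵢ(bᵢ - 1) = (a - 1)(a - 2) ≤ 2` forces every
`bᵢ ≤ 2`. The two equations then read `c₁ + 2c₂ = 3a - 2` and `c₁ + 4c₂ = a²`, whose only
solutions with `1 ≤ a ≤ 3` are `(a, c₁, c₂) = (1, 1, 0), (2, 4, 0), (3, 5, 1)`.
-/

open Finset

section
variable {ι : Type*} [Fintype ι]

/-- The class `a·H - ∑ bᵢ·Eᵢ` has anticanonical degree `2` and self-intersection `0`. -/
def IsConicClass (a : ℤ) (b : ι → ℤ) : Prop :=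
  3 * a - ∑ i, b i = 2 ∧ a ^ 2 - ∑ i, b i ^ 2 = 0

namespace IsConicClass

variable {a : ℤ} {b : ι → ℤ}

theorem le_three (h : IsConicClass a b) (hcard : Fintype.card ι ≤ 6) : a ≤ 3 := by
  have hcs := sq_sum_le_card_mul_sum_sq (s := univ) (f := b)
  rw [show ∑ i, b i = 3 * a - 2 by linarith [h.1], show ∑ i, b i ^ 2 = a ^ 2 by linarith [h.2],
    card_univ] at hcs
  have : (Fintype.card ι : ℤ) ≤ 6 := by exact_mod_cast hcard
  nlinarith [sq_nonneg a]

theorem mul_sub_one_le (h : IsConicClass a b) (hb : ∀ i, 0 ≤ b i) (i : ι) :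
    b i * (b i - 1) ≤ (a - 1) * (a - 2) := by
  have hnonneg : ∀ j, 0 ≤ b j * (b j - 1) := fun j => by
    rcases (hb j).eq_or_lt with h0 | h0
    · simp [← h0]
    · nlinarith
  calc b i * (b i - 1) ≤ ∑ j, b j * (b j - 1) :=
        single_le_sum (fun j _ => hnonneg j) (mem_univ i)
    _ = (a - 1) * (a - 2) := by
        simp only [mul_sub, mul_one, sum_sub_distrib, ← sq]
        linarith [h.1, h.2]

theorem le_two (h : IsConicClass a b) (hb : ∀ i, 0 ≤ b i) (ha : a ≤ 3) (i : ι) : b i ≤ 2 := by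
  have := h.mul_sub_one_le hb i
  have : 1 ≤ a := by linarith [h.1, sum_nonneg fun j (_ : j ∈ univ) => hb j]
  nlinarith

end IsConicClass

variable [DecidableEq ι]

def multiplicities (s t : Finset ι) (l : ι) : ℤ :=
  if l ∈ t then 2 else if l ∈ s then 1 else 0

theorem eq_multiplicities {b : ι → ℤ} (hb : ∀ i, 0 ≤ b i) (hb2 : ∀ i, b i ≤ 2) :
    b = multiplicities {i | b i = 1} {i | b i = 2} := by
  funext l
  have := hb l
  have := hb2 l
  simp only [multiplicities, mem_filter, mem_univ, true_and]
  split_ifs <;> omega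

theorem sum_comp_multiplicities {s t : Finset ι} (hst : Disjoint s t) (g : ℤ → ℤ) (hg : g 0 = 0) :
    ∑ l, g (multiplicities s t l) = #s * g 1 + #t * g 2 := by
  have hsplit : ∀ l, g (multiplicities s t l) =
      (if l ∈ s then g 1 else 0) + (if l ∈ t then g 2 else 0) := fun l => by
    by_cases hlt : l ∈ t
    · simp [multiplicities, hlt, disjoint_right.1 hst hlt]
    · by_cases hls : l ∈ s <;> simp [multiplicities, hlt, hls, hg]
  simp only [hsplit, sum_add_distrib, sum_ite_mem, univ_inter, sum_const, nsmul_eq_mul]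

theorem isConicClass_multiplicities_iff {a : ℤ} {s t : Finset ι} (hst : Disjoint s t) :
    IsConicClass a (multiplicities s t) ↔ #s + 2 * #t = 3 * a - 2 ∧ #s + 4 * #t = a ^ 2 := by
  have hsum := sum_comp_multiplicities hst id rfl
  have hsq := sum_comp_multiplicities hst (· ^ 2) (by norm_num)
  simp only [id] at hsum hsq
  rw [IsConicClass, hsum, hsq]
  constructor <;> rintro ⟨h1, h2⟩ <;> constructor <;> push_cast at * <;> linarith

end

theorem conic_counts {a : ℤ} {c₁ c₂ : ℕ} (h₁ : c₁ + 2 * c₂ = 3 * a - 2) (h₂ : c₁ + 4 * c₂ = a ^ 2)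
    (ha : a ≤ 3) :
    (a = 1 ∧ c₁ = 1 ∧ c₂ = 0) ∨ (a = 2 ∧ c₁ = 4 ∧ c₂ = 0) ∨ (a = 3 ∧ c₁ = 5 ∧ c₂ = 1) := by
  have : 1 ≤ a := by omega
  interval_cases a <;> omega

theorem conic_classes_on_del_pezzo_general (n : ℕ) (hn1 : 3 ≤ n)
    (a : ℤ) (b : Fin (9 - n) → ℤ) (hb : ∀ i, 0 ≤ b i) :
    (3 * a - ∑ i, b i = 2 ∧ a ^ 2 - ∑ i, (b i) ^ 2 = 0) ↔
    ((∃ i, a = 1 ∧ ∀ l, b l = if l = i then 1 else 0) ∨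
     (∃ s : Finset (Fin (9 - n)), s.card = 4 ∧ a = 2 ∧
        ∀ l, b l = if l ∈ s then 1 else 0) ∨
     (∃ k, ∃ s : Finset (Fin (9 - n)), s.card = 5 ∧ k ∉ s ∧ a = 3 ∧
        ∀ l, b l = if l = k then 2 else if l ∈ s then 1 else 0)) := by
  change IsConicClass a b ↔ _
  constructor
  · intro h
    have ha := h.le_three (by rw [Fintype.card_fin]; omega)
    obtain ⟨s, t, hst, rfl⟩ : ∃ s t, Disjoint s t ∧ b = multiplicities s t :=
      ⟨_, _, disjoint_filter.2 fun _ _ h₁ h₂ => by omega, eq_multiplicities hb (h.le_two hb ha)⟩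
    obtain ⟨h₁, h₂⟩ := (isConicClass_multiplicities_iff hst).1 h
    rcases conic_counts h₁ h₂ ha with ⟨rfl, hs, ht⟩ | ⟨rfl, hs, ht⟩ | ⟨rfl, hs, ht⟩
    · obtain ⟨i, rfl⟩ := card_eq_one.1 hs
      obtain rfl := card_eq_zero.1 ht
      exact .inl ⟨i, rfl, fun l => by simp [multiplicities]⟩
    · obtain rfl := card_eq_zero.1 ht
      exact .inr (.inl ⟨s, hs, rfl, fun l => by simp [multiplicities]⟩)
    · obtain ⟨k, rfl⟩ := card_eq_one.1 ht
      exact .inr (.inr ⟨k, s, hs, disjoint_singleton_right.1 hst, rfl, fun l => by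
        simp [multiplicities]⟩)
  · rintro (⟨i, rfl, hbl⟩ | ⟨s, hs, rfl, hbl⟩ | ⟨k, s, hs, hks, rfl, hbl⟩)
    · rw [show b = multiplicities {i} ∅ by funext l; simp [hbl, multiplicities],
        isConicClass_multiplicities_iff (disjoint_empty_right _)]
      simp
    · rw [show b = multiplicities s ∅ by funext l; simp [hbl, multiplicities],
        isConicClass_multiplicities_iff (disjoint_empty_right _)]
      simp [hs]
    · rw [show b = multiplicities s {k} by funext l; simp [hbl, multiplicities],
        isConicClass_multiplicities_iff (disjoint_singleton_right.2 hks)]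
      simp [hs]

/-- Lemma 2.2 (conics on Del Pezzo surfaces), as a Diophantine classification.
A class `C = a·H - ∑ bᵢ·Eᵢ` with `a ≥ 0`, `bᵢ ≥ 0` satisfies
`3a - ∑ bᵢ = 2` and `a² - ∑ bᵢ² = 0` iff it is one of `H - E_i`,
`2H - E_a - E_b - E_c - E_d`, or `3H - 2E_a - E_b - E_c - E_d - E_e - E_f`. -/
theorem conic_classes_on_del_pezzo (n : ℕ) (hn1 : 3 ≤ n) (hn2 : n ≤ 8)
    (a : ℤ) (b : Fin (9 - n) → ℤ) (ha : 0 ≤ a) (hb : ∀ i, 0 ≤ b i) :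
    (3 * a - ∑ i, b i = 2 ∧ a ^ 2 - ∑ i, (b i) ^ 2 = 0) ↔
    ((∃ i, a = 1 ∧ ∀ l, b l = if l = i then 1 else 0) ∨
     (∃ s : Finset (Fin (9 - n)), s.card = 4 ∧ a = 2 ∧
        ∀ l, b l = if l ∈ s then 1 else 0) ∨
     (∃ k, ∃ s : Finset (Fin (9 - n)), s.card = 5 ∧ k ∉ s ∧ a = 3 ∧
        ∀ l, b l = if l = k then 2 else if l ∈ s then 1 else 0)) :=
  conic_classes_on_del_pezzo_general n hn1 a b hb
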